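/- arXiv:1010.0366 — 2 statements merged into one kernel-verified Lean document; each statement's English description precedes it below -/
import Mathlib

section
/- Let f : (X,𝒯₁) → (Y,𝒯₂) be a map between L-fuzzy topological spaces. Then f is L-fuzzy weakly Semi-Preopen if and only if T_{𝒯₁}(f_L^←(V),r) ≤ f_L^←(spℐ_{𝒯₂}(V,r)) for every V ∈ L^Y and r ∈ L∖{⊥}. -/
namespace LFuzzy

/-- A (complete) DeMorgan structure on a complete lattice: an order-reversing involution. -/
structure DeMorgan (L : Type*) [CompleteLattice L] where
  compl : L → L
  compl_antitone : ∀ a b : L, a ≤ b → compl b ≤ compl a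
  compl_involutive : ∀ a : L, compl (compl a) = a

variable {L X Y : Type*} [CompleteLattice L]

/-- Pointwise DeMorgan complement of an L-fuzzy subset. -/
def pcompl (c : DeMorgan L) (U : X → L) : X → L := fun x => c.compl (U x)

/-- An L-fuzzy topology on X. -/
def IsTopology (T : (X → L) → L) : Prop :=
  T ⊥ = ⊤ ∧ T ⊤ = ⊤ ∧ (∀ U V : X → L, T U ⊓ T V ≤ T (U ⊓ V)) ∧
    ∀ S : Set (X → L), (⨅ U ∈ S, T U) ≤ T (sSup S)

/-- r-fuzzy closure operator. -/
def cl (c : DeMorgan L) (T : (X → L) → L) (U : X → L) (r : L) : X → L :=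
  sInf {V | U ≤ V ∧ r ≤ T (pcompl c V)}

/-- r-fuzzy interior operator. -/
def intr (T : (X → L) → L) (U : X → L) (r : L) : X → L :=
  sSup {V | V ≤ U ∧ r ≤ T V}

/-- r-fuzzy Semi-Preopen. -/
def SPO (c : DeMorgan L) (T : (X → L) → L) (U : X → L) (r : L) : Prop :=
  U ≤ cl c T (intr T (cl c T U r) r) r

/-- r-fuzzy Semi-Preclosed. -/
def SPC (c : DeMorgan L) (T : (X → L) → L) (U : X → L) (r : L) : Prop :=
  intr T (cl c T (intr T U r) r) r ≤ U

/-- Semi-Preinterior. -/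
def spInt (c : DeMorgan L) (T : (X → L) → L) (V : X → L) (r : L) : X → L :=
  sSup {W | W ≤ V ∧ SPO c T W r}

/-- Semi-Preclosure. -/
def spCl (c : DeMorgan L) (T : (X → L) → L) (V : X → L) (r : L) : X → L :=
  sInf {W | V ≤ W ∧ SPC c T W r}

/-- r-fuzzy θ-closure. -/
def thCl (c : DeMorgan L) (T : (X → L) → L) (U : X → L) (r : L) : X → L :=
  sInf {V | U ≤ intr T V r ∧ r ≤ T (pcompl c V)}

/-- r-fuzzy θ-interior. -/
def thInt (c : DeMorgan L) (T : (X → L) → L) (U : X → L) (r : L) : X → L :=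
  sSup {V | cl c T V r ≤ U ∧ r ≤ T V}

/-- Image L-fuzzy set operator induced by f. -/
def im (f : X → Y) (U : X → L) : Y → L := fun y => ⨆ x, ⨆ _ : f x = y, U x

/-- Preimage L-fuzzy set operator induced by f. -/
def pre (f : X → Y) (V : Y → L) : X → L := fun x => V (f x)

/-- L-fuzzy weakly open function. -/
def WeaklyOpen (c : DeMorgan L) (T₁ : (X → L) → L) (T₂ : (Y → L) → L) (f : X → Y) : Prop :=
  ∀ (U : X → L) (r : L), r ≠ ⊥ → r ≤ T₁ U →
    im f U ≤ intr T₂ (im f (cl c T₁ U r)) r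

/-- L-fuzzy weakly Semi-Preopen function. -/
def WeaklySPOpen (c : DeMorgan L) (T₁ : (X → L) → L) (T₂ : (Y → L) → L) (f : X → Y) : Prop :=
  ∀ (U : X → L) (r : L), r ≠ ⊥ → r ≤ T₁ U →
    im f U ≤ spInt c T₂ (im f (cl c T₁ U r)) r

/-- L-fuzzy weakly Semi-Preclosed function. -/
def WeaklySPClosed (c : DeMorgan L) (T₁ : (X → L) → L) (T₂ : (Y → L) → L) (f : X → Y) : Prop :=
  ∀ (U : X → L) (r : L), r ≠ ⊥ → r ≤ T₁ (pcompl c U) →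
    spCl c T₂ (im f (intr T₁ U r)) r ≤ im f U

/-- L-fuzzy strongly continuous function. -/
def StronglyCont (c : DeMorgan L) (T₁ : (X → L) → L) (f : X → Y) : Prop :=
  ∀ (U : X → L) (r : L), r ≠ ⊥ → im f (cl c T₁ U r) ≤ im f U

/-- Quasi-coincidence of two L-fuzzy subsets. -/
def Quasi (c : DeMorgan L) (A B : X → L) : Prop := ∃ x, ¬ A x ≤ c.compl (B x)

end LFuzzy

open LFuzzy

variable {L X Y : Type*}


section Aux
variable [CompleteLattice L]

lemma im_mono (f : X → Y) {U U' : X → L} (h : U ≤ U') : im f U ≤ im f U' := by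
  intro y
  exact iSup_mono fun x => iSup_mono fun _ => h x

lemma im_pre_le (f : X → Y) (V : Y → L) : im f (pre f V) ≤ V := by
  intro y
  exact iSup_le fun x => iSup_le fun hx => by simp [pre, hx]

lemma le_pre_im (f : X → Y) (U : X → L) : U ≤ pre f (im f U) := by
  intro x
  exact le_iSup_of_le x (by simp)

lemma spInt_mono (c : DeMorgan L) (T : (Y → L) → L) {V V' : Y → L} (h : V ≤ V') (r : L) :
    spInt c T V r ≤ spInt c T V' r := by
  apply sSup_le_sSup
  rintro W ⟨h1, h2⟩
  exact ⟨h1.trans h, h2⟩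

/-- Galois: im f U ≤ V ↔ U ≤ pre f V -/
lemma im_le_iff (f : X → Y) (U : X → L) (V : Y → L) : im f U ≤ V ↔ U ≤ pre f V :=
  ⟨fun h => (le_pre_im f U).trans (fun x => h (f x)),
   fun h => (im_mono f h).trans (im_pre_le f V)⟩

end Aux

theorem stmt10 [CompleteLattice L] (c : DeMorgan L)
    (T₁ : (X → L) → L) (T₂ : (Y → L) → L) (hT₁ : IsTopology T₁) (hT₂ : IsTopology T₂)
    (f : X → Y) :
    WeaklySPOpen c T₁ T₂ f ↔
      ∀ (V : Y → L) (r : L), r ≠ ⊥ →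
        thInt c T₁ (pre f V) r ≤ pre f (spInt c T₂ V r) := by
  constructor
  · intro hw V r hr
    apply sSup_le
    rintro W ⟨hWV, hWT⟩
    rw [← im_le_iff]
    have h1 := hw W r hr hWT
    refine h1.trans (spInt_mono c T₂ ?_ r)
    exact (im_mono f hWV).trans (im_pre_le f V)
  · intro h U r hr hU
    rw [im_le_iff]
    refine le_trans ?_ (h (im f (cl c T₁ U r)) r hr)
    apply le_sSup
    exact ⟨le_pre_im f _, hU⟩
end

section
/- Let f : (X,𝒯₁) → (Y,𝒯₂) be L-fuzzy weakly Semi-Preopen. Then f_L^→(U) ≤ spℐ_{𝒯₂}(f_L^→(C_{𝒯₁}(U,r)),r) for every r-fuzzy preopen subset U ∈ L^X. -/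
open LFuzzy

variable {L X Y : Type*}


section Aux
variable [CompleteLattice L] (c : DeMorgan L)

lemma aux_compl_iInf {ι : Sort*} (g : ι → L) :
    c.compl (⨅ i, g i) = ⨆ i, c.compl (g i) := by
  apply le_antisymm
  · have h1 : ∀ i, c.compl (⨆ j, c.compl (g j)) ≤ g i := fun i => by
      have := c.compl_antitone _ _ (le_iSup (fun j => c.compl (g j)) i)
      simpa [c.compl_involutive] using this
    have := c.compl_antitone _ _ (le_iInf h1)
    simpa [c.compl_involutive] using this
  · exact iSup_le fun i => c.compl_antitone _ _ (iInf_le g i)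

lemma aux_pcompl_sInf (S : Set (X → L)) :
    pcompl c (sInf S) = sSup (pcompl c '' S) := by
  rw [sSup_image]
  funext x
  simp only [pcompl, sInf_apply, iSup_apply, aux_compl_iInf]
  exact iSup_subtype'' S (fun V => c.compl (V x))

lemma aux_cl_closed (T : (X → L) → L) (hT : IsTopology T) (A : X → L) (r : L) :
    r ≤ T (pcompl c (cl c T A r)) := by
  rw [cl, aux_pcompl_sInf]
  refine le_trans ?_ (hT.2.2.2 _)
  refine le_iInf fun W => le_iInf fun hW => ?_
  obtain ⟨V, hV, rfl⟩ := hW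
  exact hV.2

lemma aux_intr_open (T : (X → L) → L) (hT : IsTopology T) (A : X → L) (r : L) :
    r ≤ T (intr T A r) := by
  refine le_trans ?_ (hT.2.2.2 {V | V ≤ A ∧ r ≤ T V})
  exact le_iInf fun V => le_iInf fun hV => hV.2

lemma aux_im_mono {f : X → Y} {A B : X → L} (hAB : A ≤ B) : im f A ≤ im f B := by
  intro y
  exact iSup_le fun x => iSup_le fun hx => le_iSup_of_le x (le_iSup_of_le hx (hAB x))

lemma aux_spInt_mono (T : (Y → L) → L) {A B : Y → L} (hAB : A ≤ B) (r : L) :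
    spInt c T A r ≤ spInt c T B r :=
  sSup_le_sSup fun W hW => ⟨le_trans hW.1 hAB, hW.2⟩

end Aux

theorem stmt13 [CompleteLattice L] (c : DeMorgan L)
    (T₁ : (X → L) → L) (T₂ : (Y → L) → L) (hT₁ : IsTopology T₁) (hT₂ : IsTopology T₂)
    (f : X → Y) (h : WeaklySPOpen c T₁ T₂ f)
    (U : X → L) (r : L) (hr : r ≠ ⊥) (hU : U ≤ intr T₁ (cl c T₁ U r) r) :
    im f U ≤ spInt c T₂ (im f (cl c T₁ U r)) r := by
  set V := intr T₁ (cl c T₁ U r) r with hVdef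
  have hVopen : r ≤ T₁ V := aux_intr_open T₁ hT₁ _ r
  have hVle : V ≤ cl c T₁ U r := sSup_le fun W hW => hW.1
  have hclVle : cl c T₁ V r ≤ cl c T₁ U r :=
    sInf_le ⟨hVle, aux_cl_closed c T₁ hT₁ U r⟩
  calc im f U ≤ im f V := aux_im_mono hU
    _ ≤ spInt c T₂ (im f (cl c T₁ V r)) r := h V r hr hVopen
    _ ≤ spInt c T₂ (im f (cl c T₁ U r)) r :=
        aux_spInt_mono c T₂ (aux_im_mono hclVle) r
end
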